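/- arXiv:2507.22578 — 5 statements merged into one kernel-verified Lean document; each statement's English description precedes it below -/
import Mathlib

section
/- Let u, q, p : ℝ³ → ℝ be arbitrary smooth functions of (t,x,y). Define K1 = u_y (q p_{xy} + q_{xy} p) − u_{xyy} q p − (1/2) ∂_y(q_t p) − q_y (p_t − u_x p_y) + u_{yy} q p_x and K2 = −u_x (q p_{xy} + q_{xy} p) + u_{xxy} q p + (1/2) ∂_x(q_t p) + q (p_{tx} − u_{xx} p_y) − u_y q_x p_x. Then the identity ∂_t(q_{xy} p) + ∂_x K1 + ∂_y K2 = ℓ_F(q)·p − q·ℓ*_F(p) holds at every point of ℝ³. (Equivalently, the horizontal 2-form Ω_{q,p} = q_{xy} p dx∧dy + K1 dy∧dt + K2 dt∧dx satisfies d_h Ω_{q,p} = (ℓ_F(q) p − q ℓ*_F(p)) dt∧dx∧dy, i.e. Ω_{q,p} represents the canonical conservation law of the rotated Euler equation.) -/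
noncomputable section

/-- Partial derivative in `t` of a function on `ℝ³ = ℝ × ℝ × ℝ` (coordinates `(t, x, y)`). -/
def Dt (f : ℝ × ℝ × ℝ → ℝ) : ℝ × ℝ × ℝ → ℝ := fun r => fderiv ℝ f r (1, 0, 0)

/-- Partial derivative in `x`. -/
def Dx (f : ℝ × ℝ × ℝ → ℝ) : ℝ × ℝ × ℝ → ℝ := fun r => fderiv ℝ f r (0, 1, 0)

/-- Partial derivative in `y`. -/
def Dy (f : ℝ × ℝ × ℝ → ℝ) : ℝ × ℝ × ℝ → ℝ := fun r => fderiv ℝ f r (0, 0, 1)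

/-- The Jacobian bracket `J(a,b) = aₓ b_y − a_y bₓ`. -/
def Jb (a b : ℝ × ℝ × ℝ → ℝ) : ℝ × ℝ × ℝ → ℝ :=
  fun r => Dx a r * Dy b r - Dy a r * Dx b r

/-- `E(u) = x uₓ + y u_y − 2 u`. -/
def Ee (u : ℝ × ℝ × ℝ → ℝ) : ℝ × ℝ × ℝ → ℝ :=
  fun r => r.2.1 * Dx u r + r.2.2 * Dy u r - 2 * u r

/-- The linearization operator `ℓ_F(q) = q_txy − J(q, u_xy) − J(u, q_xy)` of the
rotated Euler equation `u_txy = J(u, u_xy)`. -/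
def lF (u q : ℝ × ℝ × ℝ → ℝ) : ℝ × ℝ × ℝ → ℝ :=
  fun r => Dt (Dx (Dy q)) r - Jb q (Dx (Dy u)) r - Jb u (Dx (Dy q)) r

/-- The adjoint linearization operator `ℓ*_F(p) = −(p_t − J(u,p))_xy − J(u_xy, p)` of the
rotated Euler equation. -/
def lFs (u p : ℝ × ℝ × ℝ → ℝ) : ℝ × ℝ × ℝ → ℝ :=
  fun r => -(Dx (Dy (fun z => Dt p z - Jb u p z)) r) - Jb (Dx (Dy u)) p r

/-- The Laplacian `Δf = f_xx + f_yy` (in the spatial variables `x`, `y`). -/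
def Lap (f : ℝ × ℝ × ℝ → ℝ) : ℝ × ℝ × ℝ → ℝ :=
  fun r => Dx (Dx f) r + Dy (Dy f) r

/-- The linearization operator `ℓ_F(q) = Δq_t − J(q, Δu) − J(u, Δq)` of the
two-dimensional Euler equation `Δu_t = J(u, Δu)`. -/
def lFD (u q : ℝ × ℝ × ℝ → ℝ) : ℝ × ℝ × ℝ → ℝ :=
  fun r => Lap (Dt q) r - Jb q (Lap u) r - Jb u (Lap q) r

/-- The adjoint linearization operator `ℓ*_F(p) = −Δ(p_t − J(u,p)) − J(Δu, p)` of the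
two-dimensional Euler equation. -/
def lFsD (u p : ℝ × ℝ × ℝ → ℝ) : ℝ × ℝ × ℝ → ℝ :=
  fun r => -(Lap (fun z => Dt p z - Jb u p z) r) - Jb (Lap u) p r


namespace CclAux

variable {f g : ℝ × ℝ × ℝ → ℝ}

@[fun_prop]
theorem contDiff_Dv (hf : ContDiff ℝ (⊤ : ℕ∞) f) (v : ℝ × ℝ × ℝ) :
    ContDiff ℝ (⊤ : ℕ∞) (fun z => fderiv ℝ f z v) :=
  (hf.fderiv_right (by simp)).clm_apply contDiff_const

theorem Dv_mul (hf : ContDiff ℝ (⊤ : ℕ∞) f) (hg : ContDiff ℝ (⊤ : ℕ∞) g) (r v : ℝ × ℝ × ℝ) :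
    fderiv ℝ (fun z => f z * g z) r v
      = fderiv ℝ f r v * g r + f r * fderiv ℝ g r v := by
  rw [fderiv_fun_mul (hf.differentiable (by simp) r) (hg.differentiable (by simp) r)]
  simp; ring

theorem Dv_add (hf : ContDiff ℝ (⊤ : ℕ∞) f) (hg : ContDiff ℝ (⊤ : ℕ∞) g) (r v : ℝ × ℝ × ℝ) :
    fderiv ℝ (fun z => f z + g z) r v
      = fderiv ℝ f r v + fderiv ℝ g r v := by
  rw [fderiv_fun_add (hf.differentiable (by simp) r) (hg.differentiable (by simp) r)]; simp

theorem Dv_sub (hf : ContDiff ℝ (⊤ : ℕ∞) f) (hg : ContDiff ℝ (⊤ : ℕ∞) g) (r v : ℝ × ℝ × ℝ) :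
    fderiv ℝ (fun z => f z - g z) r v
      = fderiv ℝ f r v - fderiv ℝ g r v := by
  rw [fderiv_fun_sub (hf.differentiable (by simp) r) (hg.differentiable (by simp) r)]; simp

theorem Dv_neg (r v : ℝ × ℝ × ℝ) :
    fderiv ℝ (fun z => -(f z)) r v = -(fderiv ℝ f r v) := by
  rw [fderiv_fun_neg]; simp

theorem Dv_const (c : ℝ) (r v : ℝ × ℝ × ℝ) :
    fderiv ℝ (fun _ : ℝ × ℝ × ℝ => c) r v = 0 := by
  simp

theorem Dv_swap (hf : ContDiff ℝ (⊤ : ℕ∞) f) (r v w : ℝ × ℝ × ℝ) :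
    fderiv ℝ (fun z => fderiv ℝ f z w) r v
      = fderiv ℝ (fun z => fderiv ℝ f z v) r w := by
  have h2 : IsSymmSndFDerivAt ℝ f r := (hf.contDiffAt).isSymmSndFDerivAt (by
    rw [minSmoothness_of_isRCLikeNormedField]; exact WithTop.coe_le_coe.mpr le_top)
  have key : ∀ a : ℝ × ℝ × ℝ, fderiv ℝ (fun z => fderiv ℝ f z a) r
      = (fderiv ℝ (fderiv ℝ f) r).flip a := by
    intro a
    have := fderiv_clm_apply (c := fderiv ℝ f) (u := fun _ => a)
      (((hf.fderiv_right (m := 1) (WithTop.coe_le_coe.mpr le_top)).differentiable one_ne_zero) r) (differentiableAt_const a)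
    simpa using this
  rw [key, key]
  exact h2.eq v w

theorem swap_xt (hf : ContDiff ℝ (⊤ : ℕ∞) f) (r : ℝ × ℝ × ℝ) :
    fderiv ℝ (fun z => fderiv ℝ f z (1, 0, 0)) r ((0 : ℝ), (1 : ℝ), (0 : ℝ))
      = fderiv ℝ (fun z => fderiv ℝ f z (0, 1, 0)) r ((1 : ℝ), (0 : ℝ), (0 : ℝ)) :=
  Dv_swap hf r _ _

theorem swap_yt (hf : ContDiff ℝ (⊤ : ℕ∞) f) (r : ℝ × ℝ × ℝ) :
    fderiv ℝ (fun z => fderiv ℝ f z (1, 0, 0)) r ((0 : ℝ), (0 : ℝ), (1 : ℝ))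
      = fderiv ℝ (fun z => fderiv ℝ f z (0, 0, 1)) r ((1 : ℝ), (0 : ℝ), (0 : ℝ)) :=
  Dv_swap hf r _ _

theorem swap_yx (hf : ContDiff ℝ (⊤ : ℕ∞) f) (r : ℝ × ℝ × ℝ) :
    fderiv ℝ (fun z => fderiv ℝ f z (0, 1, 0)) r ((0 : ℝ), (0 : ℝ), (1 : ℝ))
      = fderiv ℝ (fun z => fderiv ℝ f z (0, 0, 1)) r ((0 : ℝ), (1 : ℝ), (0 : ℝ)) :=
  Dv_swap hf r _ _

end CclAux

theorem Dt_def (f : ℝ × ℝ × ℝ → ℝ) : Dt f = fun r => fderiv ℝ f r (1, 0, 0) := rfl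
theorem Dx_def (f : ℝ × ℝ × ℝ → ℝ) : Dx f = fun r => fderiv ℝ f r (0, 1, 0) := rfl
theorem Dy_def (f : ℝ × ℝ × ℝ → ℝ) : Dy f = fun r => fderiv ℝ f r (0, 0, 1) := rfl

open CclAux in
set_option maxHeartbeats 4000000 in
/-- the canonical conservation law of the rotated Euler equation:
for arbitrary smooth `u, q, p` one has
`∂_t(q_xy p) + ∂_x K1 + ∂_y K2 = ℓ_F(q)·p − q·ℓ*_F(p)`. -/
theorem statement0 (u q p : ℝ × ℝ × ℝ → ℝ)
    (hu : ContDiff ℝ (⊤ : ℕ∞) u) (hq : ContDiff ℝ (⊤ : ℕ∞) q) (hp : ContDiff ℝ (⊤ : ℕ∞) p) :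
    ∀ r : ℝ × ℝ × ℝ,
      Dt (fun z => Dx (Dy q) z * p z) r
        + Dx (fun z =>
            Dy u z * (q z * Dx (Dy p) z + Dx (Dy q) z * p z)
              - Dx (Dy (Dy u)) z * q z * p z
              - (1 / 2) * Dy (fun w => Dt q w * p w) z
              - Dy q z * (Dt p z - Dx u z * Dy p z)
              + Dy (Dy u) z * q z * Dx p z) r
        + Dy (fun z =>
            -(Dx u z * (q z * Dx (Dy p) z + Dx (Dy q) z * p z))
              + Dx (Dx (Dy u)) z * q z * p z
              + (1 / 2) * Dx (fun w => Dt q w * p w) z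
              + q z * (Dt (Dx p) z - Dx (Dx u) z * Dy p z)
              - Dy u z * Dx q z * Dx p z) r
      = lF u q r * p r - q r * lFs u p r := by
  intro r
  simp only [lF, lFs, Jb, Dt_def, Dx_def, Dy_def]
  simp (disch := fun_prop) only [Dv_mul, Dv_add, Dv_sub, Dv_neg, Dv_const,
    swap_xt, swap_yt, swap_yx]
  ring
end
end

section
/- Let u : ℝ³ → ℝ be a smooth solution of the rotated Euler equation u_{txy} = J(u, u_{xy}), let ε, λ, μ ∈ ℝ, and let s : ℝ³ → ℝ be a smooth solution of the covering system s_t = J(u,s) + ε E(u), J(u_{xy}, s) = λ + μ u_{xy} − ε E(u_{xy}). Then the function p₀(t,x,y) = s − λ t x y − (μ + 2ε) t u is a solution of the adjoint linearized equation ℓ*_F(p₀) = 0, i.e. −(∂p₀/∂t − J(u,p₀))_{xy} − J(u_{xy}, p₀) = 0 at every point. -/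
noncomputable section

section Aux


variable {f g : ℝ × ℝ × ℝ → ℝ} {c : ℝ}

@[fun_prop] lemma Dt_contDiff (hf : ContDiff ℝ (⊤ : ℕ∞) f) : ContDiff ℝ (⊤ : ℕ∞) (Dt f) :=
  (hf.fderiv_right (by simp)).clm_apply contDiff_const
@[fun_prop] lemma Dx_contDiff (hf : ContDiff ℝ (⊤ : ℕ∞) f) : ContDiff ℝ (⊤ : ℕ∞) (Dx f) :=
  (hf.fderiv_right (by simp)).clm_apply contDiff_const
@[fun_prop] lemma Dy_contDiff (hf : ContDiff ℝ (⊤ : ℕ∞) f) : ContDiff ℝ (⊤ : ℕ∞) (Dy f) :=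
  (hf.fderiv_right (by simp)).clm_apply contDiff_const

lemma fdv_add (v : ℝ × ℝ × ℝ) (hf : ContDiff ℝ (⊤ : ℕ∞) f) (hg : ContDiff ℝ (⊤ : ℕ∞) g) :
    (fun r => fderiv ℝ (fun z => f z + g z) r v) = fun r => fderiv ℝ f r v + fderiv ℝ g r v := by
  funext r
  rw [fderiv_fun_add ((hf.differentiable (by simp)) r) ((hg.differentiable (by simp)) r)]
  simp

lemma fdv_sub (v : ℝ × ℝ × ℝ) (hf : ContDiff ℝ (⊤ : ℕ∞) f) (hg : ContDiff ℝ (⊤ : ℕ∞) g) :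
    (fun r => fderiv ℝ (fun z => f z - g z) r v) = fun r => fderiv ℝ f r v - fderiv ℝ g r v := by
  funext r
  rw [fderiv_fun_sub ((hf.differentiable (by simp)) r) ((hg.differentiable (by simp)) r)]
  simp

lemma fdv_mul (v : ℝ × ℝ × ℝ) (hf : ContDiff ℝ (⊤ : ℕ∞) f) (hg : ContDiff ℝ (⊤ : ℕ∞) g) :
    (fun r => fderiv ℝ (fun z => f z * g z) r v)
      = fun r => f r * fderiv ℝ g r v + g r * fderiv ℝ f r v := by
  funext r
  rw [fderiv_fun_mul ((hf.differentiable (by simp)) r) ((hg.differentiable (by simp)) r)]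
  simp

lemma fdv_const (v : ℝ × ℝ × ℝ) :
    (fun r : ℝ×ℝ×ℝ => fderiv ℝ (fun _ => c) r v) = fun _ => 0 := by
  funext r; simp

lemma fdv_coord1 (v : ℝ × ℝ × ℝ) :
    (fun r : ℝ×ℝ×ℝ => fderiv ℝ (fun z : ℝ×ℝ×ℝ => z.1) r v) = fun _ => v.1 := by
  funext r
  rw [show (fun z : ℝ×ℝ×ℝ => z.1) = ⇑(ContinuousLinearMap.fst ℝ ℝ (ℝ×ℝ)) from rfl,
    (ContinuousLinearMap.fst ℝ ℝ (ℝ×ℝ)).fderiv]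
  rfl

lemma fdv_coord2 (v : ℝ × ℝ × ℝ) :
    (fun r : ℝ×ℝ×ℝ => fderiv ℝ (fun z : ℝ×ℝ×ℝ => z.2.1) r v) = fun _ => v.2.1 := by
  funext r
  rw [show (fun z : ℝ×ℝ×ℝ => z.2.1)
      = ⇑((ContinuousLinearMap.fst ℝ ℝ ℝ).comp (ContinuousLinearMap.snd ℝ ℝ (ℝ×ℝ))) from rfl,
    ((ContinuousLinearMap.fst ℝ ℝ ℝ).comp (ContinuousLinearMap.snd ℝ ℝ (ℝ×ℝ))).fderiv]
  rfl

lemma fdv_coord3 (v : ℝ × ℝ × ℝ) :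
    (fun r : ℝ×ℝ×ℝ => fderiv ℝ (fun z : ℝ×ℝ×ℝ => z.2.2) r v) = fun _ => v.2.2 := by
  funext r
  rw [show (fun z : ℝ×ℝ×ℝ => z.2.2)
      = ⇑((ContinuousLinearMap.snd ℝ ℝ ℝ).comp (ContinuousLinearMap.snd ℝ ℝ (ℝ×ℝ))) from rfl,
    ((ContinuousLinearMap.snd ℝ ℝ ℝ).comp (ContinuousLinearMap.snd ℝ ℝ (ℝ×ℝ))).fderiv]
  rfl

lemma fdv_comm (v w : ℝ × ℝ × ℝ) (hf : ContDiff ℝ (⊤ : ℕ∞) f) :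
    (fun r => fderiv ℝ (fun z => fderiv ℝ f z v) r w)
      = fun r => fderiv ℝ (fun z => fderiv ℝ f z w) r v := by
  funext r
  have hd : ∀ y, HasFDerivAt f (fderiv ℝ f y) y := fun y =>
    ((hf.differentiable (by simp)) y).hasFDerivAt
  have hd2 : HasFDerivAt (fderiv ℝ f) (fderiv ℝ (fderiv ℝ f) r) r :=
    (((hf.fderiv_right (m := (⊤ : ℕ∞)) (by simp)).differentiable (by simp)) r).hasFDerivAt
  have hsym := second_derivative_symmetric hd hd2 v w
  have e : ∀ a : ℝ × ℝ × ℝ,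
      fderiv ℝ (fun z => fderiv ℝ f z a) r = (fderiv ℝ (fderiv ℝ f) r).flip a := by
    intro a
    have := fderiv_clm_apply (c := fderiv ℝ f) (u := fun _ => a)
      (((hf.fderiv_right (m := (⊤ : ℕ∞)) (by simp)).differentiable (by simp)) r) (differentiableAt_const a)
    simpa using this
  rw [e v, e w]
  simpa using hsym.symm

-- Dt lemmas
lemma Dt_add (hf : ContDiff ℝ (⊤ : ℕ∞) f) (hg : ContDiff ℝ (⊤ : ℕ∞) g) :
    Dt (fun z => f z + g z) = fun r => Dt f r + Dt g r := fdv_add _ hf hg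
lemma Dt_sub (hf : ContDiff ℝ (⊤ : ℕ∞) f) (hg : ContDiff ℝ (⊤ : ℕ∞) g) :
    Dt (fun z => f z - g z) = fun r => Dt f r - Dt g r := fdv_sub _ hf hg
lemma Dt_mul (hf : ContDiff ℝ (⊤ : ℕ∞) f) (hg : ContDiff ℝ (⊤ : ℕ∞) g) :
    Dt (fun z => f z * g z) = fun r => f r * Dt g r + g r * Dt f r := fdv_mul _ hf hg
lemma Dt_const : Dt (fun _ => c) = fun _ => 0 := fdv_const _
lemma Dt_ct : Dt (fun z : ℝ×ℝ×ℝ => z.1) = fun _ => 1 := fdv_coord1 _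
lemma Dt_cx : Dt (fun z : ℝ×ℝ×ℝ => z.2.1) = fun _ => 0 := fdv_coord2 _
lemma Dt_cy : Dt (fun z : ℝ×ℝ×ℝ => z.2.2) = fun _ => 0 := fdv_coord3 _

-- Dx lemmas
lemma Dx_add (hf : ContDiff ℝ (⊤ : ℕ∞) f) (hg : ContDiff ℝ (⊤ : ℕ∞) g) :
    Dx (fun z => f z + g z) = fun r => Dx f r + Dx g r := fdv_add _ hf hg
lemma Dx_sub (hf : ContDiff ℝ (⊤ : ℕ∞) f) (hg : ContDiff ℝ (⊤ : ℕ∞) g) :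
    Dx (fun z => f z - g z) = fun r => Dx f r - Dx g r := fdv_sub _ hf hg
lemma Dx_mul (hf : ContDiff ℝ (⊤ : ℕ∞) f) (hg : ContDiff ℝ (⊤ : ℕ∞) g) :
    Dx (fun z => f z * g z) = fun r => f r * Dx g r + g r * Dx f r := fdv_mul _ hf hg
lemma Dx_const : Dx (fun _ => c) = fun _ => 0 := fdv_const _
lemma Dx_ct : Dx (fun z : ℝ×ℝ×ℝ => z.1) = fun _ => 0 := fdv_coord1 _
lemma Dx_cx : Dx (fun z : ℝ×ℝ×ℝ => z.2.1) = fun _ => 1 := fdv_coord2 _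
lemma Dx_cy : Dx (fun z : ℝ×ℝ×ℝ => z.2.2) = fun _ => 0 := fdv_coord3 _

-- Dy lemmas
lemma Dy_add (hf : ContDiff ℝ (⊤ : ℕ∞) f) (hg : ContDiff ℝ (⊤ : ℕ∞) g) :
    Dy (fun z => f z + g z) = fun r => Dy f r + Dy g r := fdv_add _ hf hg
lemma Dy_sub (hf : ContDiff ℝ (⊤ : ℕ∞) f) (hg : ContDiff ℝ (⊤ : ℕ∞) g) :
    Dy (fun z => f z - g z) = fun r => Dy f r - Dy g r := fdv_sub _ hf hg
lemma Dy_mul (hf : ContDiff ℝ (⊤ : ℕ∞) f) (hg : ContDiff ℝ (⊤ : ℕ∞) g) :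
    Dy (fun z => f z * g z) = fun r => f r * Dy g r + g r * Dy f r := fdv_mul _ hf hg
lemma Dy_const : Dy (fun _ => c) = fun _ => 0 := fdv_const _
lemma Dy_ct : Dy (fun z : ℝ×ℝ×ℝ => z.1) = fun _ => 0 := fdv_coord1 _
lemma Dy_cx : Dy (fun z : ℝ×ℝ×ℝ => z.2.1) = fun _ => 0 := fdv_coord2 _
lemma Dy_cy : Dy (fun z : ℝ×ℝ×ℝ => z.2.2) = fun _ => 1 := fdv_coord3 _

-- commutation (canonical order: Dt outermost, then Dx, then Dy)
lemma Dx_Dt (hf : ContDiff ℝ (⊤ : ℕ∞) f) : Dx (Dt f) = Dt (Dx f) := fdv_comm _ _ hf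
lemma Dy_Dt (hf : ContDiff ℝ (⊤ : ℕ∞) f) : Dy (Dt f) = Dt (Dy f) := fdv_comm _ _ hf
lemma Dy_Dx (hf : ContDiff ℝ (⊤ : ℕ∞) f) : Dy (Dx f) = Dx (Dy f) := fdv_comm _ _ hf

end Aux

set_option maxHeartbeats 4000000

/-- if `u` solves the rotated Euler equation and `s` solves the covering
system, then `p₀ = s − λ t x y − (μ + 2ε) t u` is a solution of the adjoint linearized
equation `ℓ*_F(p₀) = 0`. -/
theorem statement1 (u s : ℝ × ℝ × ℝ → ℝ) (ε lam μ : ℝ)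
    (hu : ContDiff ℝ (⊤ : ℕ∞) u) (hs : ContDiff ℝ (⊤ : ℕ∞) s)
    (heq : ∀ r, Dt (Dx (Dy u)) r = Jb u (Dx (Dy u)) r)
    (hc1 : ∀ r, Dt s r = Jb u s r + ε * Ee u r)
    (hc2 : ∀ r, Jb (Dx (Dy u)) s r = lam + μ * Dx (Dy u) r - ε * Ee (Dx (Dy u)) r) :
    ∀ r, lFs u
      (fun z => s z - lam * z.1 * z.2.1 * z.2.2 - (μ + 2 * ε) * z.1 * u z) r = 0 := by
  intro r
  have hDts : Dt s = fun z => Jb u s z + ε * Ee u z := funext hc1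
  have H1 : Dx (Dy (Dt s)) r = Dx (Dy (fun z => Jb u s z + ε * Ee u z)) r := by rw [hDts]
  have H2 := hc2 r
  have H3 := heq r
  clear hDts hc1 hc2 heq
  simp (disch := fun_prop) only [lFs, Jb, Ee,
    Dt_add, Dt_sub, Dt_mul, Dt_const, Dt_ct, Dt_cx, Dt_cy,
    Dx_add, Dx_sub, Dx_mul, Dx_const, Dx_ct, Dx_cx, Dx_cy,
    Dy_add, Dy_sub, Dy_mul, Dy_const, Dy_ct, Dy_cx, Dy_cy,
    Dx_Dt, Dy_Dt, Dy_Dx] at H1 H2 H3 ⊢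
  linear_combination -H1 - H2 + (μ + 2*ε) * r.1 * H3
end
end

section
/- Let u : ℝ³ → ℝ be a smooth solution of the rotated Euler equation u_{txy} = J(u, u_{xy}). Then the function φ₁ := −t u_t − u satisfies the linearized equation ℓ_F(φ₁) = 0 at every point, i.e. φ₁ generates an infinitesimal symmetry of the equation. -/
noncomputable section

abbrev E3 := ℝ × ℝ × ℝ

def Dd (v : E3) (f : E3 → ℝ) : E3 → ℝ := fun r => fderiv ℝ f r v

lemma contDiff_Dd {f : E3 → ℝ} (hf : ContDiff ℝ (⊤ : ℕ∞) f) (v : E3) :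
    ContDiff ℝ (⊤ : ℕ∞) (Dd v f) :=
  (hf.fderiv_right (by simp)).clm_apply contDiff_const

lemma Dd_comm {f : E3 → ℝ} (hf : ContDiff ℝ (⊤ : ℕ∞) f) (v w : E3) :
    Dd v (Dd w f) = Dd w (Dd v f) := by
  funext r
  have hd2 : HasFDerivAt (fderiv ℝ f) (fderiv ℝ (fderiv ℝ f) r) r :=
    ((hf.fderiv_right (m := 1) (by exact WithTop.coe_le_coe.mpr le_top)).differentiable one_ne_zero r).hasFDerivAt
  have hsymm := second_derivative_symmetric
    (fun y => (hf.differentiable (by simp) y).hasFDerivAt) hd2 v w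
  have key : ∀ a b : E3, Dd a (Dd b f) r = fderiv ℝ (fderiv ℝ f) r a b := by
    intro a b
    have h := (hd2.clm_apply (hasFDerivAt_const b r)).fderiv
    show fderiv ℝ (fun y => (fderiv ℝ f y) b) r a = _
    rw [h]; simp
  rw [key, key, hsymm]

lemma Dd_shape {g h : E3 → ℝ} (hg : ContDiff ℝ (⊤ : ℕ∞) g) (hh : ContDiff ℝ (⊤ : ℕ∞) h) (v : E3) :
    Dd v (fun z => -(z.1 * g z) - h z) =
      fun r => -(v.1 * g r + r.1 * Dd v g r) - Dd v h r := by
  funext r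
  have hg' : DifferentiableAt ℝ g r := (hg.differentiable (by simp)) r
  have hmul : DifferentiableAt ℝ (fun z : E3 => z.1 * g z) r :=
    (differentiable_fst.mul (hg.differentiable (by simp))) r
  show fderiv ℝ (fun z => -(z.1 * g z) - h z) r v = _
  rw [fderiv_fun_sub (f := fun z => -(z.1 * g z)) hmul.neg ((hh.differentiable (by simp)) r), fderiv_fun_neg,
    fderiv_fun_mul (differentiable_fst r) hg']
  simp [Dd, fderiv_fst]
  ring

lemma Dd_shape0 {g h : E3 → ℝ} (hg : ContDiff ℝ (⊤ : ℕ∞) g) (hh : ContDiff ℝ (⊤ : ℕ∞) h) (v : E3)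
    (hv : v.1 = 0) :
    Dd v (fun z => -(z.1 * g z) - h z) = fun r => -(r.1 * Dd v g r) - Dd v h r := by
  rw [Dd_shape hg hh v, hv]; funext r; ring

lemma Dd_shape1 {g h : E3 → ℝ} (hg : ContDiff ℝ (⊤ : ℕ∞) g) (hh : ContDiff ℝ (⊤ : ℕ∞) h) (v : E3)
    (hv : v.1 = 1) :
    Dd v (fun z => -(z.1 * g z) - h z) =
      fun r => (-(r.1 * Dd v g r) - Dd v h r) - g r := by
  rw [Dd_shape hg hh v, hv]; funext r; ring

lemma Dd_Jshape {a b c d : E3 → ℝ} (ha : ContDiff ℝ (⊤ : ℕ∞) a) (hb : ContDiff ℝ (⊤ : ℕ∞) b)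
    (hc : ContDiff ℝ (⊤ : ℕ∞) c) (hd : ContDiff ℝ (⊤ : ℕ∞) d) (v : E3) :
    Dd v (fun z => a z * b z - c z * d z) = fun r =>
      (Dd v a r * b r + a r * Dd v b r) - (Dd v c r * d r + c r * Dd v d r) := by
  funext r
  have ha' := (ha.differentiable (by simp)) r
  have hb' := (hb.differentiable (by simp)) r
  have hc' := (hc.differentiable (by simp)) r
  have hd' := (hd.differentiable (by simp)) r
  show fderiv ℝ (fun z => a z * b z - c z * d z) r v = _
  rw [fderiv_fun_sub (f := fun z => a z * b z) (g := fun z => c z * d z) (ha'.mul hb') (hc'.mul hd'), fderiv_fun_mul ha' hb', fderiv_fun_mul hc' hd']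
  simp [Dd]
  ring

/-- if `u` solves the rotated Euler equation `u_txy = J(u, u_xy)`,
then `φ₁ = −t u_t − u` satisfies the linearized equation `ℓ_F(φ₁) = 0`. -/
theorem statement2 (u : ℝ × ℝ × ℝ → ℝ) (hu : ContDiff ℝ (⊤ : ℕ∞) u)
    (heq : ∀ r, Dt (Dx (Dy u)) r = Jb u (Dx (Dy u)) r) :
    ∀ r, lF u (fun z => -(z.1 * Dt u z) - u z) r = 0 := by
  have eT : Dt = Dd (1,0,0) := rfl
  have eX : Dx = Dd (0,1,0) := rfl
  have eY : Dy = Dd (0,0,1) := rfl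
  simp only [lF, Jb, eT, eX, eY] at heq ⊢
  -- smoothness
  have hut : ContDiff ℝ (⊤ : ℕ∞) (Dd (1,0,0) u) := contDiff_Dd hu _
  have hyu : ContDiff ℝ (⊤ : ℕ∞) (Dd (0,0,1) u) := contDiff_Dd hu _
  have hw : ContDiff ℝ (⊤ : ℕ∞) (Dd (0,1,0) (Dd (0,0,1) u)) := contDiff_Dd hyu _
  have hwt : ContDiff ℝ (⊤ : ℕ∞) (Dd (1,0,0) (Dd (0,1,0) (Dd (0,0,1) u))) := contDiff_Dd hw _
  have hyut : ContDiff ℝ (⊤ : ℕ∞) (Dd (0,0,1) (Dd (1,0,0) u)) := contDiff_Dd hut _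
  -- commutation of mixed partials
  have c1 : Dd (0,0,1) (Dd (1,0,0) u) = Dd (1,0,0) (Dd (0,0,1) u) := Dd_comm hu _ _
  have c2 : Dd (0,1,0) (Dd (0,0,1) (Dd (1,0,0) u))
      = Dd (1,0,0) (Dd (0,1,0) (Dd (0,0,1) u)) := by
    rw [c1]; exact Dd_comm hyu _ _
  -- shape computations
  have s3 : Dd (0,0,1) (fun z => -(z.1 * Dd (1,0,0) u z) - u z)
      = fun s => -(s.1 * Dd (0,0,1) (Dd (1,0,0) u) s) - Dd (0,0,1) u s :=
    Dd_shape0 hut hu _ rfl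
  have s2 : Dd (0,1,0) (fun z => -(z.1 * Dd (1,0,0) u z) - u z)
      = fun s => -(s.1 * Dd (0,1,0) (Dd (1,0,0) u) s) - Dd (0,1,0) u s :=
    Dd_shape0 hut hu _ rfl
  have s23 : Dd (0,1,0) (Dd (0,0,1) (fun z => -(z.1 * Dd (1,0,0) u z) - u z))
      = fun s => -(s.1 * Dd (1,0,0) (Dd (0,1,0) (Dd (0,0,1) u)) s)
          - Dd (0,1,0) (Dd (0,0,1) u) s := by
    rw [s3, Dd_shape0 hyut (contDiff_Dd hu _) _ rfl, c2]
  have s123 : Dd (1,0,0) (Dd (0,1,0) (Dd (0,0,1)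
        (fun z => -(z.1 * Dd (1,0,0) u z) - u z)))
      = fun s => (-(s.1 * Dd (1,0,0) (Dd (1,0,0) (Dd (0,1,0) (Dd (0,0,1) u))) s)
          - Dd (1,0,0) (Dd (0,1,0) (Dd (0,0,1) u)) s)
          - Dd (1,0,0) (Dd (0,1,0) (Dd (0,0,1) u)) s := by
    rw [s23]; exact Dd_shape1 hwt hw _ rfl
  have s223 : Dd (0,1,0) (Dd (0,1,0) (Dd (0,0,1)
        (fun z => -(z.1 * Dd (1,0,0) u z) - u z)))
      = fun s => (-(s.1 * Dd (0,1,0) (Dd (1,0,0) (Dd (0,1,0) (Dd (0,0,1) u))) s)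
          - Dd (0,1,0) (Dd (0,1,0) (Dd (0,0,1) u)) s) := by
    rw [s23]; exact Dd_shape0 hwt hw _ rfl
  have s323 : Dd (0,0,1) (Dd (0,1,0) (Dd (0,0,1)
        (fun z => -(z.1 * Dd (1,0,0) u z) - u z)))
      = fun s => (-(s.1 * Dd (0,0,1) (Dd (1,0,0) (Dd (0,1,0) (Dd (0,0,1) u))) s)
          - Dd (0,0,1) (Dd (0,1,0) (Dd (0,0,1) u)) s) := by
    rw [s23]; exact Dd_shape0 hwt hw _ rfl
  -- time derivative of the equation
  have hweq : Dd (1,0,0) (Dd (0,1,0) (Dd (0,0,1) u))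
      = fun z => Dd (0,1,0) u z * Dd (0,0,1) (Dd (0,1,0) (Dd (0,0,1) u)) z
          - Dd (0,0,1) u z * Dd (0,1,0) (Dd (0,1,0) (Dd (0,0,1) u)) z :=
    funext heq
  have htt : Dd (1,0,0) (Dd (1,0,0) (Dd (0,1,0) (Dd (0,0,1) u)))
      = fun s =>
        (Dd (1,0,0) (Dd (0,1,0) u) s * Dd (0,0,1) (Dd (0,1,0) (Dd (0,0,1) u)) s
          + Dd (0,1,0) u s * Dd (1,0,0) (Dd (0,0,1) (Dd (0,1,0) (Dd (0,0,1) u))) s)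
        - (Dd (1,0,0) (Dd (0,0,1) u) s * Dd (0,1,0) (Dd (0,1,0) (Dd (0,0,1) u)) s
          + Dd (0,0,1) u s * Dd (1,0,0) (Dd (0,1,0) (Dd (0,1,0) (Dd (0,0,1) u))) s) := by
    rw [congrArg (Dd (1,0,0)) hweq]
    exact Dd_Jshape (contDiff_Dd hu _) (contDiff_Dd hw _) hyu (contDiff_Dd hw _) _
  rw [← Dd_comm hu (0,1,0) (1,0,0), ← c1, ← Dd_comm hw (0,0,1) (1,0,0),
    ← Dd_comm hw (0,1,0) (1,0,0)] at htt
  intro r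
  have htt' := congrFun htt r
  have hB' := congrFun s123 r
  have hC' := congrFun s223 r
  have hD' := congrFun s323 r
  have h2' := congrFun s2 r
  have h3' := congrFun s3 r
  rw [hB', hC', hD', h2', h3']
  linear_combination (-(r.1)) * htt' + (-2) * heq r
end
end

section
/- Let u : ℝ³ → ℝ be a smooth solution of the rotated Euler equation u_{txy} = J(u, u_{xy}). Then the function φ₃ := −x u_x + y u_y satisfies the linearized equation ℓ_F(φ₃) = 0 at every point, i.e. φ₃ generates an infinitesimal symmetry of the equation. -/
noncomputable section

/-! ### Auxiliary calculus toolkit -/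

private def DD (v : ℝ × ℝ × ℝ) (f : ℝ × ℝ × ℝ → ℝ) : ℝ × ℝ × ℝ → ℝ :=
  fun z => fderiv ℝ f z v

private lemma Dt_eq (f : ℝ × ℝ × ℝ → ℝ) : Dt f = DD (1, 0, 0) f := rfl
private lemma Dx_eq (f : ℝ × ℝ × ℝ → ℝ) : Dx f = DD (0, 1, 0) f := rfl
private lemma Dy_eq (f : ℝ × ℝ × ℝ → ℝ) : Dy f = DD (0, 0, 1) f := rfl

private lemma DD_contDiff {f : ℝ × ℝ × ℝ → ℝ} (hf : ContDiff ℝ (⊤ : ℕ∞) f) (v : ℝ × ℝ × ℝ) :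
    ContDiff ℝ (⊤ : ℕ∞) (DD v f) := by
  have h1 : ContDiff ℝ (⊤ : ℕ∞) (fderiv ℝ f) := hf.fderiv_right (by simp)
  exact (ContinuousLinearMap.apply ℝ ℝ v).contDiff.comp h1

private lemma DD_schwarz {f : ℝ × ℝ × ℝ → ℝ} (hf : ContDiff ℝ (⊤ : ℕ∞) f) (v w z : ℝ × ℝ × ℝ) :
    DD v (DD w f) z = DD w (DD v f) z := by
  have hdf : DifferentiableAt ℝ (fderiv ℝ f) z :=
    ((hf.fderiv_right (m := (⊤ : ℕ∞)) (by simp)).differentiable (by simp)) z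
  have hsym : IsSymmSndFDerivAt ℝ f z := hf.contDiffAt.isSymmSndFDerivAt (by rw [minSmoothness_of_isRCLikeNormedField]; exact WithTop.coe_le_coe.mpr (le_top : (2 : ℕ∞) ≤ ⊤))
  have key : ∀ a b : ℝ × ℝ × ℝ, DD a (DD b f) z = fderiv ℝ (fderiv ℝ f) z a b := by
    intro a b
    have h : HasFDerivAt (fun y => fderiv ℝ f y b)
        ((fderiv ℝ (fderiv ℝ f) z).flip b) z := by
      have := hdf.hasFDerivAt.clm_apply (hasFDerivAt_const b z)
      simpa using this
    show fderiv ℝ (fun y => fderiv ℝ f y b) z a = _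
    rw [h.fderiv]
    simp
  rw [key, key]
  exact hsym v w

private lemma hasF_x (r : ℝ × ℝ × ℝ) :
    HasFDerivAt (fun z : ℝ × ℝ × ℝ => z.2.1)
      ((ContinuousLinearMap.fst ℝ ℝ ℝ).comp (ContinuousLinearMap.snd ℝ ℝ (ℝ × ℝ))) r :=
  ((ContinuousLinearMap.fst ℝ ℝ ℝ).comp (ContinuousLinearMap.snd ℝ ℝ (ℝ × ℝ))).hasFDerivAt

private lemma hasF_y (r : ℝ × ℝ × ℝ) :
    HasFDerivAt (fun z : ℝ × ℝ × ℝ => z.2.2)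
      ((ContinuousLinearMap.snd ℝ ℝ ℝ).comp (ContinuousLinearMap.snd ℝ ℝ (ℝ × ℝ))) r :=
  ((ContinuousLinearMap.snd ℝ ℝ ℝ).comp (ContinuousLinearMap.snd ℝ ℝ (ℝ × ℝ))).hasFDerivAt

private lemma DD_X {a b : ℝ × ℝ × ℝ → ℝ} {r : ℝ × ℝ × ℝ} (ha : DifferentiableAt ℝ a r)
    (hb : DifferentiableAt ℝ b r) (v : ℝ × ℝ × ℝ) :
    DD v (fun z => -(z.2.1 * a z) + z.2.2 * b z) r
      = -(v.2.1 * a r + r.2.1 * DD v a r) + (v.2.2 * b r + r.2.2 * DD v b r) := by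
  have H := (((hasF_x r).mul ha.hasFDerivAt).neg.add ((hasF_y r).mul hb.hasFDerivAt))
  show fderiv ℝ _ r v = _
  rw [HasFDerivAt.fderiv (f := fun z => -(z.2.1 * a z) + z.2.2 * b z) H]
  simp [DD]
  ring

private lemma DD_Xadd {a b c : ℝ × ℝ × ℝ → ℝ} {r : ℝ × ℝ × ℝ} (ha : DifferentiableAt ℝ a r)
    (hb : DifferentiableAt ℝ b r) (hc : DifferentiableAt ℝ c r) (v : ℝ × ℝ × ℝ) :
    DD v (fun z => (-(z.2.1 * a z) + z.2.2 * b z) + c z) r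
      = (-(v.2.1 * a r + r.2.1 * DD v a r) + (v.2.2 * b r + r.2.2 * DD v b r)) + DD v c r := by
  have H := ((((hasF_x r).mul ha.hasFDerivAt).neg.add ((hasF_y r).mul hb.hasFDerivAt)).add
    hc.hasFDerivAt)
  show fderiv ℝ _ r v = _
  rw [HasFDerivAt.fderiv (f := fun z => (-(z.2.1 * a z) + z.2.2 * b z) + c z) H]
  simp [DD]
  ring

private lemma DD_mulsub {a b c d : ℝ × ℝ × ℝ → ℝ} {r : ℝ × ℝ × ℝ}
    (ha : DifferentiableAt ℝ a r) (hb : DifferentiableAt ℝ b r)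
    (hc : DifferentiableAt ℝ c r) (hd : DifferentiableAt ℝ d r) (v : ℝ × ℝ × ℝ) :
    DD v (fun z => a z * b z - c z * d z) r
      = (DD v a r * b r + a r * DD v b r) - (DD v c r * d r + c r * DD v d r) := by
  have H := (ha.hasFDerivAt.mul hb.hasFDerivAt).sub (hc.hasFDerivAt.mul hd.hasFDerivAt)
  show fderiv ℝ _ r v = _
  rw [HasFDerivAt.fderiv (f := fun z => a z * b z - c z * d z) H]
  simp [DD]
  ring

/-- if `u` solves the rotated Euler equation `u_txy = J(u, u_xy)`,
then `φ₃ = −x uₓ + y u_y` satisfies the linearized equation `ℓ_F(φ₃) = 0`. -/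
theorem statement4 (u : ℝ × ℝ × ℝ → ℝ) (hu : ContDiff ℝ (⊤ : ℕ∞) u)
    (heq : ∀ r, Dt (Dx (Dy u)) r = Jb u (Dx (Dy u)) r) :
    ∀ r, lF u (fun z => -(z.2.1 * Dx u z) + z.2.2 * Dy u z) r = 0 := by
  intro r
  simp only [lF, Jb, Dt_eq, Dx_eq, Dy_eq]
  have hd1 : ∀ v : ℝ × ℝ × ℝ, ContDiff ℝ (⊤ : ℕ∞) (DD v u) := fun v => DD_contDiff hu v
  have hd2 : ∀ v w : ℝ × ℝ × ℝ, ContDiff ℝ (⊤ : ℕ∞) (DD v (DD w u)) :=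
    fun v w => DD_contDiff (hd1 w) v
  have hd3 : ∀ v w x : ℝ × ℝ × ℝ, ContDiff ℝ (⊤ : ℕ∞) (DD v (DD w (DD x u))) :=
    fun v w x => DD_contDiff (hd2 w x) v
  have dd1 : ∀ v z : ℝ × ℝ × ℝ, DifferentiableAt ℝ (DD v u) z :=
    fun v z => (hd1 v).differentiable (by simp) z
  have dd2 : ∀ v w z : ℝ × ℝ × ℝ, DifferentiableAt ℝ (DD v (DD w u)) z :=
    fun v w z => (hd2 v w).differentiable (by simp) z
  have dd3 : ∀ v w x z : ℝ × ℝ × ℝ, DifferentiableAt ℝ (DD v (DD w (DD x u))) z :=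
    fun v w x z => (hd3 v w x).differentiable (by simp) z
  -- Schwarz commutations (functional form)
  have s1 : DD (0,0,1) (DD (0,1,0) u) = DD (0,1,0) (DD (0,0,1) u) :=
    funext fun z => DD_schwarz hu _ _ z
  have s2 : DD (0,1,0) (DD (0,0,1) (DD (0,0,1) u))
      = DD (0,0,1) (DD (0,1,0) (DD (0,0,1) u)) :=
    funext fun z => DD_schwarz (hd1 _) _ _ z
  have s3 : DD (0,0,1) (DD (0,1,0) (DD (0,1,0) (DD (0,0,1) u)))
      = DD (0,1,0) (DD (0,0,1) (DD (0,1,0) (DD (0,0,1) u))) :=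
    funext fun z => DD_schwarz (hd2 _ _) _ _ z
  have s4 : DD (1,0,0) (DD (0,1,0) (DD (0,1,0) (DD (0,0,1) u)))
      = DD (0,1,0) (DD (1,0,0) (DD (0,1,0) (DD (0,0,1) u))) :=
    funext fun z => DD_schwarz (hd2 _ _) _ _ z
  have s5 : DD (1,0,0) (DD (0,0,1) (DD (0,1,0) (DD (0,0,1) u)))
      = DD (0,0,1) (DD (1,0,0) (DD (0,1,0) (DD (0,0,1) u))) :=
    funext fun z => DD_schwarz (hd2 _ _) _ _ z
  -- the equation, in functional form
  have hteq : DD (1,0,0) (DD (0,1,0) (DD (0,0,1) u))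
      = fun z => DD (0,1,0) u z * DD (0,0,1) (DD (0,1,0) (DD (0,0,1) u)) z
          - DD (0,0,1) u z * DD (0,1,0) (DD (0,1,0) (DD (0,0,1) u)) z := by
    funext z
    have h := heq z
    simp only [Jb, Dt_eq, Dx_eq, Dy_eq] at h
    exact h
  -- first derivatives of φ₃
  have h1 : DD (0,0,1) (fun z => -(z.2.1 * DD (0,1,0) u z) + z.2.2 * DD (0,0,1) u z)
      = fun z => (-(z.2.1 * DD (0,0,1) (DD (0,1,0) u) z)
          + z.2.2 * DD (0,0,1) (DD (0,0,1) u) z) + DD (0,0,1) u z := by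
    funext z
    rw [DD_X (dd1 (0,1,0) z) (dd1 (0,0,1) z) (0,0,1)]
    norm_num
    ring
  -- φ₃_xy = X(u_xy)
  have h2 : DD (0,1,0) (DD (0,0,1)
        (fun z => -(z.2.1 * DD (0,1,0) u z) + z.2.2 * DD (0,0,1) u z))
      = fun z => -(z.2.1 * DD (0,1,0) (DD (0,1,0) (DD (0,0,1) u)) z)
          + z.2.2 * DD (0,0,1) (DD (0,1,0) (DD (0,0,1) u)) z := by
    funext z
    rw [h1, DD_Xadd (dd2 (0,0,1) (0,1,0) z) (dd2 (0,0,1) (0,0,1) z) (dd1 (0,0,1) z) (0,1,0),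
      s1, s2]
    norm_num
    ring
  rw [h2,
    DD_X (dd3 (0,1,0) (0,1,0) (0,0,1) r) (dd3 (0,0,1) (0,1,0) (0,0,1) r) (1,0,0),
    DD_X (dd3 (0,1,0) (0,1,0) (0,0,1) r) (dd3 (0,0,1) (0,1,0) (0,0,1) r) (0,0,1),
    DD_X (dd3 (0,1,0) (0,1,0) (0,0,1) r) (dd3 (0,0,1) (0,1,0) (0,0,1) r) (0,1,0),
    DD_X (dd1 (0,1,0) r) (dd1 (0,0,1) r) (0,1,0),
    DD_X (dd1 (0,1,0) r) (dd1 (0,0,1) r) (0,0,1),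
    s4, s5, hteq,
    DD_mulsub (dd1 (0,1,0) r) (dd3 (0,0,1) (0,1,0) (0,0,1) r)
      (dd1 (0,0,1) r) (dd3 (0,1,0) (0,1,0) (0,0,1) r) (0,1,0),
    DD_mulsub (dd1 (0,1,0) r) (dd3 (0,0,1) (0,1,0) (0,0,1) r)
      (dd1 (0,0,1) r) (dd3 (0,1,0) (0,1,0) (0,0,1) r) (0,0,1),
    s1, s3]
  norm_num
  ring
end
end

section
/- Let u : ℝ³ → ℝ be a smooth solution of the rotated Euler equation u_{txy} = J(u, u_{xy}). Then the function φ₄ := −t x u_x + t y u_y + x y satisfies the linearized equation ℓ_F(φ₄) = 0 at every point, i.e. φ₄ generates an infinitesimal symmetry of the equation. -/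
noncomputable section
open ContinuousLinearMap

private def Dv (v : ℝ × ℝ × ℝ) (f : ℝ × ℝ × ℝ → ℝ) : ℝ × ℝ × ℝ → ℝ :=
  fun r => fderiv ℝ f r v

private lemma smooth_Dv {f : ℝ×ℝ×ℝ → ℝ} (hf : ContDiff ℝ (⊤:ℕ∞) f) (v : ℝ×ℝ×ℝ) :
    ContDiff ℝ (⊤:ℕ∞) (Dv v f) := by
  have h := hf.fderiv_right (m := (⊤:ℕ∞)) le_rfl
  exact (ContinuousLinearMap.apply ℝ ℝ v).contDiff.comp h

private lemma Dv_comm {f : ℝ×ℝ×ℝ → ℝ} (hf : ContDiff ℝ (⊤:ℕ∞) f) (v w r : ℝ×ℝ×ℝ) :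
    Dv v (Dv w f) r = Dv w (Dv v f) r := by
  have hsymm : IsSymmSndFDerivAt ℝ f r :=
    hf.contDiffAt.isSymmSndFDerivAt (n := (⊤:ℕ∞))
      (by rw [minSmoothness_of_isRCLikeNormedField, show ((2:WithTop ℕ∞)) = ((2:ℕ∞):WithTop ℕ∞) from rfl, WithTop.coe_le_coe]; exact le_top)
  have hdf : DifferentiableAt ℝ (fderiv ℝ f) r :=
    ((hf.fderiv_right (m := (⊤:ℕ∞)) le_rfl).differentiable (by norm_num) r)
  have h1 : ∀ w : ℝ×ℝ×ℝ, fderiv ℝ (fun z => fderiv ℝ f z w) r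
      = (ContinuousLinearMap.apply ℝ ℝ w).comp (fderiv ℝ (fderiv ℝ f) r) :=
    fun w => ((ContinuousLinearMap.apply ℝ ℝ w).hasFDerivAt.comp r hdf.hasFDerivAt).fderiv
  show fderiv ℝ (fun z => fderiv ℝ f z w) r v = fderiv ℝ (fun z => fderiv ℝ f z v) r w
  rw [h1, h1]
  simpa using hsymm v w

private lemma Dv_add (v : ℝ×ℝ×ℝ) {f g : ℝ×ℝ×ℝ→ℝ} {r : ℝ×ℝ×ℝ}
    (hf : DifferentiableAt ℝ f r) (hg : DifferentiableAt ℝ g r) :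
    Dv v (fun z => f z + g z) r = Dv v f r + Dv v g r := by
  simp [Dv, fderiv_fun_add hf hg]

private lemma Dv_sub (v : ℝ×ℝ×ℝ) {f g : ℝ×ℝ×ℝ→ℝ} {r : ℝ×ℝ×ℝ}
    (hf : DifferentiableAt ℝ f r) (hg : DifferentiableAt ℝ g r) :
    Dv v (fun z => f z - g z) r = Dv v f r - Dv v g r := by
  simp [Dv, fderiv_fun_sub hf hg]

private lemma Dv_mul (v : ℝ×ℝ×ℝ) {f g : ℝ×ℝ×ℝ→ℝ} {r : ℝ×ℝ×ℝ}
    (hf : DifferentiableAt ℝ f r) (hg : DifferentiableAt ℝ g r) :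
    Dv v (fun z => f z * g z) r = Dv v f r * g r + f r * Dv v g r := by
  simp [Dv, fderiv_fun_mul hf hg]; ring

private lemma Dv_neg (v : ℝ×ℝ×ℝ) {f : ℝ×ℝ×ℝ→ℝ} {r : ℝ×ℝ×ℝ} :
    Dv v (fun z => -f z) r = -Dv v f r := by
  simp [Dv, fderiv_neg]

private lemma Dv_const (v : ℝ×ℝ×ℝ) (c : ℝ) (r : ℝ×ℝ×ℝ) :
    Dv v (fun _ => c) r = 0 := by
  simp [Dv]

private lemma Dv_fst (v : ℝ×ℝ×ℝ) (r : ℝ×ℝ×ℝ) :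
    Dv v (fun z : ℝ×ℝ×ℝ => z.1) r = v.1 := by
  have : fderiv ℝ (fun z : ℝ×ℝ×ℝ => z.1) r = ContinuousLinearMap.fst ℝ ℝ (ℝ×ℝ) :=
    (ContinuousLinearMap.fst ℝ ℝ (ℝ×ℝ)).fderiv
  simp [Dv, this]

private lemma Dv_sx (v : ℝ×ℝ×ℝ) (r : ℝ×ℝ×ℝ) :
    Dv v (fun z : ℝ×ℝ×ℝ => z.2.1) r = v.2.1 := by
  have : fderiv ℝ (fun z : ℝ×ℝ×ℝ => z.2.1) r
      = (ContinuousLinearMap.fst ℝ ℝ ℝ).comp (ContinuousLinearMap.snd ℝ ℝ (ℝ×ℝ)) :=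
    ((ContinuousLinearMap.fst ℝ ℝ ℝ).comp (ContinuousLinearMap.snd ℝ ℝ (ℝ×ℝ))).fderiv
  simp [Dv, this]

private lemma Dv_sy (v : ℝ×ℝ×ℝ) (r : ℝ×ℝ×ℝ) :
    Dv v (fun z : ℝ×ℝ×ℝ => z.2.2) r = v.2.2 := by
  have : fderiv ℝ (fun z : ℝ×ℝ×ℝ => z.2.2) r
      = (ContinuousLinearMap.snd ℝ ℝ ℝ).comp (ContinuousLinearMap.snd ℝ ℝ (ℝ×ℝ)) :=
    ((ContinuousLinearMap.snd ℝ ℝ ℝ).comp (ContinuousLinearMap.snd ℝ ℝ (ℝ×ℝ))).fderiv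
  simp [Dv, this]


/-- if `u` solves the rotated Euler equation `u_txy = J(u, u_xy)`,
then `φ₄ = −t x uₓ + t y u_y + x y` satisfies the linearized equation `ℓ_F(φ₄) = 0`. -/
theorem statement5 (u : ℝ × ℝ × ℝ → ℝ) (hu : ContDiff ℝ (⊤ : ℕ∞) u)
    (heq : ∀ r, Dt (Dx (Dy u)) r = Jb u (Dx (Dy u)) r) :
    ∀ r, lF u (fun z => -(z.1 * z.2.1 * Dx u z) + z.1 * z.2.2 * Dy u z + z.2.1 * z.2.2) r = 0 := by
  have hu' : ContDiff ℝ (⊤:ℕ∞) u := hu.of_le (by simp)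
  have Dteq : ∀ f : ℝ×ℝ×ℝ→ℝ, Dt f = Dv (1,0,0) f := fun _ => rfl
  have Dxeq : ∀ f : ℝ×ℝ×ℝ→ℝ, Dx f = Dv (0,1,0) f := fun _ => rfl
  have Dyeq : ∀ f : ℝ×ℝ×ℝ→ℝ, Dy f = Dv (0,0,1) f := fun _ => rfl
  -- smoothness of iterated derivatives
  have sux : ContDiff ℝ (⊤:ℕ∞) (Dv (0,1,0) u) := smooth_Dv hu' _
  have suy : ContDiff ℝ (⊤:ℕ∞) (Dv (0,0,1) u) := smooth_Dv hu' _
  have sw : ContDiff ℝ (⊤:ℕ∞) (Dv (0,1,0) (Dv (0,0,1) u)) := smooth_Dv suy _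
  have suyy : ContDiff ℝ (⊤:ℕ∞) (Dv (0,0,1) (Dv (0,0,1) u)) := smooth_Dv suy _
  have suxx : ContDiff ℝ (⊤:ℕ∞) (Dv (0,1,0) (Dv (0,1,0) u)) := smooth_Dv sux _
  have swx : ContDiff ℝ (⊤:ℕ∞) (Dv (0,1,0) (Dv (0,1,0) (Dv (0,0,1) u))) := smooth_Dv sw _
  have swy : ContDiff ℝ (⊤:ℕ∞) (Dv (0,0,1) (Dv (0,1,0) (Dv (0,0,1) u))) := smooth_Dv sw _
  -- differentiability of the atoms appearing in the computations
  have du : Differentiable ℝ u := hu'.differentiable (by norm_num)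
  have dux : Differentiable ℝ (Dv (0,1,0) u) := sux.differentiable (by norm_num)
  have duy : Differentiable ℝ (Dv (0,0,1) u) := suy.differentiable (by norm_num)
  have dw : Differentiable ℝ (Dv (0,1,0) (Dv (0,0,1) u)) := sw.differentiable (by norm_num)
  have duyy : Differentiable ℝ (Dv (0,0,1) (Dv (0,0,1) u)) := suyy.differentiable (by norm_num)
  have duxx : Differentiable ℝ (Dv (0,1,0) (Dv (0,1,0) u)) := suxx.differentiable (by norm_num)
  have dwx : Differentiable ℝ (Dv (0,1,0) (Dv (0,1,0) (Dv (0,0,1) u))) :=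
    swx.differentiable (by norm_num)
  have dwy : Differentiable ℝ (Dv (0,0,1) (Dv (0,1,0) (Dv (0,0,1) u))) :=
    swy.differentiable (by norm_num)
  intro r
  simp only [lF, Jb, Dteq, Dxeq, Dyeq]
  set φ : ℝ×ℝ×ℝ→ℝ := fun z =>
    -(z.1 * z.2.1 * Dv (0,1,0) u z) + z.1 * z.2.2 * Dv (0,0,1) u z + z.2.1 * z.2.2 with hφ
  -- first y-derivative of φ
  have hq_y : ∀ z, Dv (0,0,1) φ z =
      -(z.1 * z.2.1 * Dv (0,1,0) (Dv (0,0,1) u) z) + z.1 * Dv (0,0,1) u z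
        + z.1 * z.2.2 * Dv (0,0,1) (Dv (0,0,1) u) z + z.2.1 := by
    intro z
    rw [hφ]
    simp (disch := fun_prop) only [Dv_add, Dv_mul, Dv_neg, Dv_fst, Dv_sx, Dv_sy, Dv_const]
    rw [Dv_comm hu' (0,0,1) (0,1,0) z]
    ring
  -- first x-derivative of φ
  have hq_x : ∀ z, Dv (0,1,0) φ z =
      -(z.1 * Dv (0,1,0) u z) - z.1 * z.2.1 * Dv (0,1,0) (Dv (0,1,0) u) z
        + z.1 * z.2.2 * Dv (0,1,0) (Dv (0,0,1) u) z + z.2.2 := by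
    intro z
    rw [hφ]
    simp (disch := fun_prop) only [Dv_add, Dv_mul, Dv_neg, Dv_fst, Dv_sx, Dv_sy, Dv_const]
    ring
  have hqy_fun : Dv (0,0,1) φ = fun z =>
      -(z.1 * z.2.1 * Dv (0,1,0) (Dv (0,0,1) u) z) + z.1 * Dv (0,0,1) u z
        + z.1 * z.2.2 * Dv (0,0,1) (Dv (0,0,1) u) z + z.2.1 := funext hq_y
  -- second mixed derivative of φ
  have hB : ∀ z, Dv (0,1,0) (Dv (0,0,1) φ) z =
      z.1 * z.2.2 * Dv (0,0,1) (Dv (0,1,0) (Dv (0,0,1) u)) z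
        - z.1 * z.2.1 * Dv (0,1,0) (Dv (0,1,0) (Dv (0,0,1) u)) z + 1 := by
    intro z
    rw [hqy_fun]
    simp (disch := fun_prop) only [Dv_add, Dv_sub, Dv_mul, Dv_neg, Dv_fst, Dv_sx, Dv_sy, Dv_const]
    rw [Dv_comm suy (0,1,0) (0,0,1) z]
    ring
  have hB_fun : Dv (0,1,0) (Dv (0,0,1) φ) = fun z =>
      z.1 * z.2.2 * Dv (0,0,1) (Dv (0,1,0) (Dv (0,0,1) u)) z
        - z.1 * z.2.1 * Dv (0,1,0) (Dv (0,1,0) (Dv (0,0,1) u)) z + 1 := funext hB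
  -- the equation, in Dv form
  have htw : Dv (1,0,0) (Dv (0,1,0) (Dv (0,0,1) u)) = fun z =>
      Dv (0,1,0) u z * Dv (0,0,1) (Dv (0,1,0) (Dv (0,0,1) u)) z
        - Dv (0,0,1) u z * Dv (0,1,0) (Dv (0,1,0) (Dv (0,0,1) u)) z := funext fun z => heq z
  -- y-derivative of w_t
  have hwty : ∀ z, Dv (0,0,1) (Dv (1,0,0) (Dv (0,1,0) (Dv (0,0,1) u))) z =
      Dv (0,1,0) (Dv (0,0,1) u) z * Dv (0,0,1) (Dv (0,1,0) (Dv (0,0,1) u)) z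
        + Dv (0,1,0) u z * Dv (0,0,1) (Dv (0,0,1) (Dv (0,1,0) (Dv (0,0,1) u))) z
        - Dv (0,0,1) (Dv (0,0,1) u) z * Dv (0,1,0) (Dv (0,1,0) (Dv (0,0,1) u)) z
        - Dv (0,0,1) u z * Dv (0,1,0) (Dv (0,0,1) (Dv (0,1,0) (Dv (0,0,1) u))) z := by
    intro z
    rw [htw]
    simp (disch := fun_prop) only [Dv_add, Dv_sub, Dv_mul, Dv_neg, Dv_fst, Dv_sx, Dv_sy, Dv_const]
    rw [Dv_comm hu' (0,0,1) (0,1,0) z, Dv_comm sw (0,0,1) (0,1,0) z]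
    ring
  -- x-derivative of w_t
  have hwtx : ∀ z, Dv (0,1,0) (Dv (1,0,0) (Dv (0,1,0) (Dv (0,0,1) u))) z =
      Dv (0,1,0) (Dv (0,1,0) u) z * Dv (0,0,1) (Dv (0,1,0) (Dv (0,0,1) u)) z
        + Dv (0,1,0) u z * Dv (0,1,0) (Dv (0,0,1) (Dv (0,1,0) (Dv (0,0,1) u))) z
        - Dv (0,1,0) (Dv (0,0,1) u) z * Dv (0,1,0) (Dv (0,1,0) (Dv (0,0,1) u)) z
        - Dv (0,0,1) u z * Dv (0,1,0) (Dv (0,1,0) (Dv (0,1,0) (Dv (0,0,1) u))) z := by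
    intro z
    rw [htw]
    simp (disch := fun_prop) only [Dv_add, Dv_sub, Dv_mul, Dv_neg, Dv_fst, Dv_sx, Dv_sy, Dv_const]
    ring
  rw [hB_fun, hq_x r, hq_y r]
  simp (disch := fun_prop) only [Dv_add, Dv_sub, Dv_mul, Dv_neg, Dv_fst, Dv_sx, Dv_sy, Dv_const]
  rw [Dv_comm sw (1,0,0) (0,0,1) r, Dv_comm sw (1,0,0) (0,1,0) r,
    Dv_comm sw (0,0,1) (0,1,0) r, hwty r, hwtx r]
  ring
end
end
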